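/- arXiv:2211.12755 — 2 statements merged into one kernel-verified Lean document; each statement's English description precedes it below -/
import Mathlib

section
/- For every z ∈ ℝ, every φ ∈ C([0,t];ℝ) and every 0 < s ≤ t, one has 1/A_s(T_z(φ)) = 1/A_s(φ) + (e^z − 1)/A_t(φ); in particular A_t(T_z(φ)) = e^{−z} A_t(φ). -/
/-!
Write `c = (e^z - 1) / A_t(φ)`. Since `A'_u(φ) = e^{2φ_u}`, the path `T_z(φ)` satisfies
`e^{2 T_z(φ)_u} = A'_u(φ) / (1 + c A_u(φ))²`, which is the derivative of `A_u(φ) / (1 + c A_u(φ))`.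
Hence `A_s(T_z(φ)) = A_s(φ) / (1 + c A_s(φ))`, i.e. `1 / A_s(T_z(φ)) = 1 / A_s(φ) + c`.
The denominator stays positive because `1 + c A_u(φ)` is a convex combination of `1` and `e^z`.
-/

open MeasureTheory ProbabilityTheory Set

/-- `A_s(φ) = ∫_0^s e^{2 φ_u} du`. -/
noncomputable def pA (φ : ℝ → ℝ) (s : ℝ) : ℝ := ∫ u in (0:ℝ)..s, Real.exp (2 * φ u)

/-- `Z_s(φ) = e^{-φ_s} A_s(φ)`. -/
noncomputable def pZ (φ : ℝ → ℝ) (s : ℝ) : ℝ := Real.exp (-(φ s)) * pA φ s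

/-- The anticipative transformation `T_z` on paths over `[0,t]`:
`T_z(φ)(s) = φ_s - log(1 + (A_s(φ)/A_t(φ)) (e^z - 1))`. -/
noncomputable def pT (t z : ℝ) (φ : ℝ → ℝ) (s : ℝ) : ℝ :=
  φ s - Real.log (1 + (pA φ s / pA φ t) * (Real.exp z - 1))

theorem integral_deriv_div_one_add_mul_sq {g g' : ℝ → ℝ} {a b c : ℝ} (hab : a ≤ b)
    (hg : ContinuousOn g (Icc a b)) (hg' : ∀ x ∈ Ioo a b, HasDerivAt g (g' x) x)
    (hint : IntervalIntegrable (fun u => g' u / (1 + c * g u) ^ 2) volume a b)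
    (hne : ∀ u ∈ Icc a b, 1 + c * g u ≠ 0) :
    ∫ u in a..b, g' u / (1 + c * g u) ^ 2 = g b / (1 + c * g b) - g a / (1 + c * g a) := by
  refine intervalIntegral.integral_eq_sub_of_hasDerivAt_of_le hab
    (hg.div (continuousOn_const.add (continuousOn_const.mul hg)) hne) (fun x hx => ?_) hint
  have hquot := (hg' x hx).div (((hg' x hx).const_mul c).const_add 1)
    (hne x (Ioo_subset_Icc_self hx))
  rwa [show g' x * (1 + c * g x) - g x * (c * g' x) = g' x by ring] at hquot

theorem one_add_div_mul_exp_sub_one_pos {a b : ℝ} (ha : 0 ≤ a) (hab : a ≤ b) (hb : 0 < b)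
    (z : ℝ) : 0 < 1 + (Real.exp z - 1) / b * a := by
  rw [div_mul_comm]
  have hr0 : 0 ≤ a / b := div_nonneg ha hb.le
  have hr1 : a / b ≤ 1 := (div_le_one hb).2 hab
  rcases hr1.lt_or_eq with hr1 | hr1
  · nlinarith [mul_nonneg hr0 (Real.exp_pos z).le]
  · simp [hr1, Real.exp_pos]

theorem pA_zero (φ : ℝ → ℝ) : pA φ 0 = 0 :=
  intervalIntegral.integral_same

theorem pA_nonneg (φ : ℝ → ℝ) {s : ℝ} (hs : 0 ≤ s) : 0 ≤ pA φ s :=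
  intervalIntegral.integral_nonneg hs fun _ _ => (Real.exp_pos _).le

section ContinuousPath

variable {φ : ℝ → ℝ} {t : ℝ}

theorem continuousOn_exp_two_mul (hφ : ContinuousOn φ (Icc 0 t)) :
    ContinuousOn (fun u => Real.exp (2 * φ u)) (Icc 0 t) := by
  fun_prop

theorem intervalIntegrable_exp_two_mul (hφ : ContinuousOn φ (Icc 0 t)) {a b : ℝ}
    (ha : 0 ≤ a) (hab : a ≤ b) (hb : b ≤ t) :
    IntervalIntegrable (fun u => Real.exp (2 * φ u)) volume a b :=
  ((continuousOn_exp_two_mul hφ).mono (Icc_subset_Icc ha hb)).intervalIntegrable_of_Icc hab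

theorem pA_pos (hφ : ContinuousOn φ (Icc 0 t)) (ht : 0 < t) : 0 < pA φ t :=
  intervalIntegral.intervalIntegral_pos_of_pos_on
    (intervalIntegrable_exp_two_mul hφ le_rfl ht.le le_rfl) (fun _ _ => Real.exp_pos _) ht

theorem pA_le_pA (hφ : ContinuousOn φ (Icc 0 t)) {s : ℝ} (hs : 0 ≤ s) (hst : s ≤ t) :
    pA φ s ≤ pA φ t :=
  intervalIntegral.integral_mono_interval le_rfl hs hst
    (Filter.Eventually.of_forall fun _ => (Real.exp_pos _).le)
    (intervalIntegrable_exp_two_mul hφ le_rfl (hs.trans hst) le_rfl)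

theorem continuousOn_pA (hφ : ContinuousOn φ (Icc 0 t)) (ht : 0 ≤ t) :
    ContinuousOn (pA φ) (Icc 0 t) := by
  rw [← uIcc_of_le ht]
  exact intervalIntegral.continuousOn_primitive_interval
    ((continuousOn_exp_two_mul hφ).integrableOn_Icc.mono_set (uIcc_of_le ht).le)

theorem hasDerivAt_pA (hφ : ContinuousOn φ (Icc 0 t)) {u : ℝ} (hu : u ∈ Ioo 0 t) :
    HasDerivAt (pA φ) (Real.exp (2 * φ u)) u :=
  intervalIntegral.integral_hasDerivAt_right
    (intervalIntegrable_exp_two_mul hφ le_rfl hu.1.le hu.2.le)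
    (((continuousOn_exp_two_mul hφ).mono Ioo_subset_Icc_self).stronglyMeasurableAtFilter
      isOpen_Ioo u hu)
    ((continuousOn_exp_two_mul hφ).continuousAt (Icc_mem_nhds hu.1 hu.2))

end ContinuousPath

theorem exp_two_mul_pT {t z : ℝ} {φ : ℝ → ℝ} {u : ℝ}
    (h : 0 < 1 + (Real.exp z - 1) / pA φ t * pA φ u) :
    Real.exp (2 * pT t z φ u) =
      Real.exp (2 * φ u) / (1 + (Real.exp z - 1) / pA φ t * pA φ u) ^ 2 := by
  rw [pT, div_mul_comm, mul_sub, Real.exp_sub, two_mul (Real.log _), Real.exp_add,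
    Real.exp_log h, sq]

theorem pA_pT {t : ℝ} {φ : ℝ → ℝ} (hφ : ContinuousOn φ (Icc 0 t)) (ht : 0 < t) (z : ℝ) {s : ℝ}
    (hs : 0 ≤ s) (hst : s ≤ t) :
    pA (pT t z φ) s = pA φ s / (1 + (Real.exp z - 1) / pA φ t * pA φ s) := by
  set c := (Real.exp z - 1) / pA φ t
  have hpos : ∀ u ∈ Icc 0 s, 0 < 1 + c * pA φ u := fun u hu =>
    one_add_div_mul_exp_sub_one_pos (pA_nonneg φ hu.1) (pA_le_pA hφ hu.1 (hu.2.trans hst))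
      (pA_pos hφ ht) z
  have hcont : ContinuousOn (pA φ) (Icc 0 s) :=
    (continuousOn_pA hφ ht.le).mono (Icc_subset_Icc le_rfl hst)
  have hint : IntervalIntegrable (fun u => Real.exp (2 * φ u) / (1 + c * pA φ u) ^ 2) volume 0 s :=
    (((continuousOn_exp_two_mul hφ).mono (Icc_subset_Icc le_rfl hst)).div
      ((continuousOn_const.add (continuousOn_const.mul hcont)).pow 2)
      fun u hu => (pow_pos (hpos u hu) 2).ne').intervalIntegrable_of_Icc hs
  calc pA (pT t z φ) s = ∫ u in (0:ℝ)..s, Real.exp (2 * φ u) / (1 + c * pA φ u) ^ 2 :=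
        intervalIntegral.integral_congr fun u hu => exp_two_mul_pT (hpos u (uIcc_of_le hs ▸ hu))
    _ = pA φ s / (1 + c * pA φ s) := by
        rw [integral_deriv_div_one_add_mul_sq hs hcont
          (fun u hu => hasDerivAt_pA hφ ⟨hu.1, hu.2.trans_le hst⟩) hint
          (fun u hu => (hpos u hu).ne'), pA_zero, zero_div, sub_zero]

/-- For every `z ∈ ℝ`, `φ ∈ C([0,t];ℝ)` and `0 < s ≤ t`,
`1/A_s(T_z(φ)) = 1/A_s(φ) + (e^z - 1)/A_t(φ)`; in particular
`A_t(T_z(φ)) = e^{-z} A_t(φ)`. -/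
theorem pA_pT_reciprocal (t : ℝ) (ht : 0 < t) (z : ℝ) (φ : ℝ → ℝ)
    (hφ : ContinuousOn φ (Icc 0 t)) :
    (∀ s : ℝ, 0 < s → s ≤ t →
      1 / pA (pT t z φ) s = 1 / pA φ s + (Real.exp z - 1) / pA φ t) ∧
    pA (pT t z φ) t = Real.exp (-z) * pA φ t := by
  have hAt := pA_pos hφ ht
  refine ⟨fun s hs hst => ?_, ?_⟩
  · have hAs := pA_pos (hφ.mono (Icc_subset_Icc le_rfl hst)) hs
    rw [pA_pT hφ ht z hs.le hst]
    field_simp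
  · rw [pA_pT hφ ht z ht.le le_rfl, div_mul_cancel₀ _ hAt.ne', add_sub_cancel, Real.exp_neg,
      div_eq_inv_mul]
end

section
/- Let R denote the time-reversal operation on C([0,t];ℝ), R(φ)(s) := φ_{t−s} − φ_t for 0 ≤ s ≤ t. Then for every z ∈ ℝ one has R ∘ T_z = T_{−z} ∘ R as maps on C([0,t];ℝ). -/
open MeasureTheory ProbabilityTheory Set

/-- The time reversal `R(φ)(s) = φ_{t-s} - φ_t` on `C([0,t];ℝ)`. -/
noncomputable def pR (t : ℝ) (φ : ℝ → ℝ) (s : ℝ) : ℝ := φ (t - s) - φ t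

/-!
Reversing time turns `A_s(Rφ)` into `e^{-2φ_t} (A_t(φ) - A_{t-s}(φ))`, so with
`a = A_{t-s}(φ) / A_t(φ) ∈ [0, 1]` the ratio entering `T_{-z}(Rφ)(s)` is `1 - a`. The claim then
reduces to the identity `1 + (1 - a)(e^{-z} - 1) = e^{-z} (1 + a (e^z - 1))`, whose right-hand
factor is a convex combination of `1` and `e^z`, hence positive, so the logarithm splits.
-/

open Real

theorem one_add_mul_exp_sub_one_pos {a : ℝ} (z : ℝ) (ha₀ : 0 ≤ a) (ha₁ : a ≤ 1) :
    0 < 1 + a * (exp z - 1) := by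
  rcases ha₀.eq_or_lt with rfl | ha
  · norm_num
  · nlinarith [mul_pos ha (exp_pos z)]

theorem log_one_add_one_sub_mul_exp_neg_sub_one {a z : ℝ} (h : 0 < 1 + a * (exp z - 1)) :
    log (1 + (1 - a) * (exp (-z) - 1)) = log (1 + a * (exp z - 1)) - z := by
  have hfactor : 1 + (1 - a) * (exp (-z) - 1) = exp (-z) * (1 + a * (exp z - 1)) := by
    rw [exp_neg]
    field_simp
    ring
  rw [hfactor, log_mul (exp_ne_zero _) h.ne', log_exp]
  ring

section

variable {φ : ℝ → ℝ} {t : ℝ}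

theorem pA_pos_s6 (ht : 0 < t) (hφ : IntervalIntegrable (fun u => exp (2 * φ u)) volume 0 t) :
    0 < pA φ t :=
  intervalIntegral.intervalIntegral_pos_of_pos_on hφ (fun _ _ => exp_pos _) ht

theorem pA_sub_pA (hφ : IntervalIntegrable (fun u => exp (2 * φ u)) volume 0 t) {s : ℝ}
    (hs : s ∈ Icc 0 t) : pA φ t - pA φ s = ∫ u in s..t, exp (2 * φ u) :=
  intervalIntegral.integral_interval_sub_left hφ
    (hφ.mono_set (uIcc_subset_uIcc_left (Icc_subset_uIcc hs)))

theorem div_pA_mem_Icc (hφ : IntervalIntegrable (fun u => exp (2 * φ u)) volume 0 t) {s : ℝ}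
    (hs : s ∈ Icc 0 t) : pA φ s / pA φ t ∈ Icc 0 1 := by
  have hAs : 0 ≤ pA φ s := intervalIntegral.integral_nonneg hs.1 fun _ _ => (exp_pos _).le
  have hAs_le : pA φ s ≤ pA φ t := by
    have hsplit := pA_sub_pA hφ hs
    have hrest : 0 ≤ ∫ u in s..t, exp (2 * φ u) :=
      intervalIntegral.integral_nonneg hs.2 fun _ _ => (exp_pos _).le
    linarith
  have hAt : 0 ≤ pA φ t := hAs.trans hAs_le
  exact ⟨div_nonneg hAs hAt, div_le_one_of_le₀ hAs_le hAt⟩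

theorem pA_pR (r : ℝ) :
    pA (pR t φ) r = exp (-(2 * φ t)) * ∫ u in (t - r)..t, exp (2 * φ u) := by
  have hshift : ∫ u in (0 : ℝ)..r, exp (2 * φ (t - u)) = ∫ u in (t - r)..t, exp (2 * φ u) := by
    simpa using intervalIntegral.integral_comp_sub_left (fun u => exp (2 * φ u)) t (a := 0) (b := r)
  rw [← hshift, ← intervalIntegral.integral_const_mul]
  refine intervalIntegral.integral_congr fun u _ => ?_
  rw [pR, ← exp_add]
  ring_nf

theorem pA_pR_div_pA_pR (hφ : IntervalIntegrable (fun u => exp (2 * φ u)) volume 0 t)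
    (hA : pA φ t ≠ 0) {s : ℝ} (hs : s ∈ Icc 0 t) :
    pA (pR t φ) s / pA (pR t φ) t = 1 - pA φ (t - s) / pA φ t := by
  have hts : t - s ∈ Icc 0 t := ⟨by linarith [hs.2], by linarith [hs.1]⟩
  rw [pA_pR, pA_pR, sub_self, ← pA_sub_pA hφ hts, mul_div_mul_left _ _ (exp_ne_zero _),
    sub_div]
  exact congrArg (· - _) (div_self hA)

theorem pT_self (z : ℝ) (hA : pA φ t ≠ 0) : pT t z φ t = φ t - z := by
  rw [pT, div_self hA, one_mul, add_sub_cancel, log_exp]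

end

/-- For every `z ∈ ℝ`, `R ∘ T_z = T_{-z} ∘ R` as maps on `C([0,t];ℝ)`. -/
theorem pR_comp_pT (t : ℝ) (ht : 0 < t) (z : ℝ) (φ : ℝ → ℝ)
    (hφ : ContinuousOn φ (Icc 0 t)) :
    ∀ s ∈ Icc (0:ℝ) t, pR t (pT t z φ) s = pT t (-z) (pR t φ) s := by
  intro s hs
  have hint : IntervalIntegrable (fun u => exp (2 * φ u)) volume 0 t :=
    (continuous_exp.comp_continuousOn (continuousOn_const.mul hφ)).intervalIntegrable_of_Icc ht.le
  have hA : pA φ t ≠ 0 := (pA_pos_s6 ht hint).ne'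
  have hts : t - s ∈ Icc 0 t := ⟨by linarith [hs.2], by linarith [hs.1]⟩
  obtain ⟨ha₀, ha₁⟩ := div_pA_mem_Icc hint hts
  rw [pR, pT_self z hA, pT, pT, pA_pR_div_pA_pR hint hA hs,
    log_one_add_one_sub_mul_exp_neg_sub_one (one_add_mul_exp_sub_one_pos z ha₀ ha₁), pR]
  ring
end
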